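/- Let s be a schedule, x an object, n ≥ 3, and t1, …, tn pairwise distinct transactions such that the conflict graph of s contains the directed edges t1 → t2, t2 → t3, …, t_{n-1} → t_n, and t_n → t1, each on object x (a multi-transaction conflict cycle on a single object). Then there exist two distinct transactions u and v among {t1, …, tn} such that the conflict graph of s contains both the edge u → v and the edge v → u, each on object x (i.e., every multi-transaction conflict cycle on a single object can be reduced to a 2-transaction conflict cycle). -/
import Mathlib


/-- The kind of an operation: read or write. -/
inductive OpKind where
  | read : OpKind
  | write : OpKind
deriving DecidableEq

/-- An operation: a transaction identifier, an object identifier, and a kind. -/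
structure Op where
  txn : ℕ
  obj : ℕ
  kind : OpKind

/-- The conflict graph of schedule `s` has an edge on object `x` from `t₁` to `t₂`:
some operation of `t₁` on `x` conflicts with a later-positioned operation of `t₂` on `x`. -/
def ConflictEdgeOn (s : List Op) (x t₁ t₂ : ℕ) : Prop :=
  ∃ (i j : ℕ) (p q : Op), i < j ∧ s[i]? = some p ∧ s[j]? = some q ∧
    p.txn = t₁ ∧ q.txn = t₂ ∧ t₁ ≠ t₂ ∧
    p.obj = x ∧ q.obj = x ∧
    (p.kind = OpKind.write ∨ q.kind = OpKind.write)

/-- Every multi-transaction (`n ≥ 3`) conflict cycle on a single object can be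
reduced to a 2-transaction conflict cycle. -/
theorem multi_txn_single_object_cycle_reduces
    (s : List Op) (x : ℕ) (n : ℕ) (hn : 3 ≤ n)
    (t : Fin n → ℕ) (hinj : Function.Injective t)
    (hcyc : ∀ k : Fin n,
      ConflictEdgeOn s x (t k) (t ⟨(k.val + 1) % n, Nat.mod_lt _ (by omega)⟩)) :
    ∃ u v : ℕ, u ≠ v ∧ (∃ k : Fin n, t k = u) ∧ (∃ k : Fin n, t k = v) ∧
      ConflictEdgeOn s x u v ∧ ConflictEdgeOn s x v u := by
  classical
  have hnpos : 0 < n := by omega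
  -- predecessor arithmetic on `Fin n` indices
  have pred_succ : ∀ k : Fin n, ((((k.val + n - 1) % n) + 1) % n) = k.val := by
    intro k
    have hk := k.isLt
    rcases Nat.eq_zero_or_pos k.val with h0 | hpos
    · have h1 : k.val + n - 1 = n - 1 := by omega
      have h2 : (n - 1) % n = n - 1 := Nat.mod_eq_of_lt (by omega)
      have h3 : n - 1 + 1 = n := by omega
      rw [h1, h2, h3, Nat.mod_self, h0]
    · have h1 : k.val + n - 1 = (k.val - 1) + n := by omega
      have h2 : ((k.val - 1) + n) % n = k.val - 1 := by
        rw [Nat.add_mod_right]; exact Nat.mod_eq_of_lt (by omega)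
      have h3 : k.val - 1 + 1 = k.val := by omega
      rw [h1, h2, h3]
      exact Nat.mod_eq_of_lt hk
  have pred_ne : ∀ k : Fin n, (k.val + n - 1) % n ≠ k.val := by
    intro k h
    have hs := pred_succ k
    rw [h] at hs
    have hk := k.isLt
    rcases Nat.lt_or_ge (k.val + 1) n with h2 | h2
    · rw [Nat.mod_eq_of_lt h2] at hs; omega
    · have h3 : k.val + 1 = n := by omega
      rw [h3, Nat.mod_self] at hs; omega
  -- positions of writes on `x` by cycle transactions
  have hex : ∃ m : ℕ, ∃ p : Op, s[m]? = some p ∧ p.obj = x ∧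
      p.kind = OpKind.write ∧ ∃ k : Fin n, p.txn = t k := by
    obtain ⟨i, j, p, q, hij, hi, hj, hp, hq, hne, hpx, hqx, hw⟩ := hcyc ⟨0, hnpos⟩
    rcases hw with hw | hw
    · exact ⟨i, p, hi, hpx, hw, ⟨0, hnpos⟩, hp⟩
    · exact ⟨j, q, hj, hqx, hw, _, hq⟩
  -- earliest such write, at position `a`, by transaction `t k₀`
  obtain ⟨pa, ha, hax, haw, k₀, hak⟩ := Nat.find_spec hex
  set a := Nat.find hex with ha_def
  have hmin : ∀ m : ℕ, (∃ p : Op, s[m]? = some p ∧ p.obj = x ∧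
      p.kind = OpKind.write ∧ ∃ k : Fin n, p.txn = t k) → a ≤ m :=
    fun m hm => Nat.find_min' hex hm
  -- `kp` is the cycle predecessor of `k₀`, `kpp` the predecessor of `kp`
  set kp : Fin n := ⟨(k₀.val + n - 1) % n, Nat.mod_lt _ hnpos⟩ with hkp_def
  set kpp : Fin n := ⟨(kp.val + n - 1) % n, Nat.mod_lt _ hnpos⟩ with hkpp_def
  have hne_uv : t k₀ ≠ t kp := by
    intro h
    exact pred_ne k₀ (congrArg Fin.val (hinj h.symm))
  -- edge v → u from the cycle
  have hvu : ConflictEdgeOn s x (t kp) (t k₀) := by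
    have h := hcyc kp
    have he : (⟨(kp.val + 1) % n, Nat.mod_lt _ (by omega)⟩ : Fin n) = k₀ :=
      Fin.ext (pred_succ k₀)
    rwa [he] at h
  -- edge into v from the cycle
  have hin_v : ConflictEdgeOn s x (t kpp) (t kp) := by
    have h := hcyc kpp
    have he : (⟨(kpp.val + 1) % n, Nat.mod_lt _ (by omega)⟩ : Fin n) = kp :=
      Fin.ext (pred_succ kp)
    rwa [he] at h
  -- derive edge u → v
  have huv : ConflictEdgeOn s x (t k₀) (t kp) := by
    obtain ⟨i, j, p, q, hij, hi, hj, hp, hq, hne', hpx, hqx, hw⟩ := hin_v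
    rcases hw with hw | hw
    · -- p is a write of `t kpp`
      by_cases hcase : t kpp = t k₀
      · exact ⟨i, j, p, q, hij, hi, hj, hp.trans hcase, hq, hne_uv, hpx, hqx, Or.inl hw⟩
      · have hai : a ≤ i := hmin i ⟨p, hi, hpx, hw, kpp, hp⟩
        have hane : a ≠ i := by
          intro h
          rw [h, hi] at ha
          have : pa = p := by injection ha with h'; exact h'.symm
          exact hcase (by rw [← hp, ← this, hak])
        exact ⟨a, j, pa, q, by omega, ha, hj, hak, hq, hne_uv, hax, hqx, Or.inl haw⟩
    · -- q is a write of `t kp`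
      have haj : a ≤ j := hmin j ⟨q, hj, hqx, hw, kp, hq⟩
      have hane : a ≠ j := by
        intro h
        rw [h, hj] at ha
        have : pa = q := by injection ha with h'; exact h'.symm
        exact hne_uv (by rw [← hak, this, hq])
      exact ⟨a, j, pa, q, by omega, ha, hj, hak, hq, hne_uv, hax, hqx, Or.inl haw⟩
  exact ⟨t k₀, t kp, hne_uv, ⟨k₀, rfl⟩, ⟨kp, rfl⟩, huv, hvu⟩
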